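/- arXiv:2103.00724 — 2 statements merged into one kernel-verified Lean document; each statement's English description precedes it below -/
import Mathlib

section
/- Let G be a graph of order p with p − 2 ≥ δ(G) ≥ 1. If there exists a d-sequence {𝒢_i}_{i=1}^s of G such that z_i = Σ_{j=2}^i (m_j + 1 − d_j) ≥ 0 for all 2 ≤ i ≤ s, then str(G) ≤ p + d_G, where d_G = d₁ is the degree of the first deleted vertex. Moreover, if d_G = δ(G), then str(G) = p + δ(G). -/
open Finset

/-- A numbering of a graph of order `Fintype.card V` is a bijection onto `{1, …, card V}`. -/
def IsNumbering {V : Type*} [Fintype V] (f : V → ℕ) : Prop :=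
  Set.BijOn f Set.univ (Set.Icc 1 (Fintype.card V))

/-- The strength `str_f` of a numbering `f` of `G`: the maximum of `f u + f v` over edges. -/
noncomputable def strOf {V : Type*} [Fintype V] (G : SimpleGraph V) (f : V → ℕ) : ℕ :=
  sSup {n | ∃ u v, G.Adj u v ∧ n = f u + f v}

/-- The strength of a graph: the minimum over all numberings `f` of `str_f`. -/
noncomputable def strength {V : Type*} [Fintype V] (G : SimpleGraph V) : ℕ :=
  sInf {n | ∃ f : V → ℕ, IsNumbering f ∧ strOf G f = n}

open scoped Classical

/-- Degree of `v` inside the induced subgraph on `S`. -/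
noncomputable def degIn {V : Type*} (G : SimpleGraph V) (S : Finset V) (v : V) : ℕ :=
  (S.filter fun w => G.Adj v w).card

/-- The isolated vertices of the induced subgraph on `S`. -/
noncomputable def isolSet {V : Type*} (G : SimpleGraph V) (S : Finset V) : Finset V :=
  S.filter fun v => ∀ w ∈ S, ¬ G.Adj v w

/-- The non-isolated part of the induced subgraph on `S`. -/
noncomputable def core {V : Type*} (G : SimpleGraph V) (S : Finset V) : Finset V :=
  S \ isolSet G S

/-- The induced subgraph on `S` is terminal iff it is of the form `mK₁` with `m ≥ 1`, or
`mK₁ + K_r` with `m ≥ 0`, `r ≥ 2`. -/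
def Terminal {V : Type*} (G : SimpleGraph V) (S : Finset V) : Prop :=
  (core G S = ∅ ∧ S.Nonempty) ∨
    (2 ≤ (core G S).card ∧ ∀ v ∈ core G S, ∀ w ∈ core G S, v ≠ w → G.Adj v w)

/-- A d-sequence `𝒢₁, …, 𝒢ₛ` of `G`: `𝒢ᵢ` is the induced subgraph of `G` on `S i`
(so `𝒢ᵢ = mᵢK₁ + Gᵢ` where `Gᵢ` is induced on `core G (S i)`), `𝒢₁ = G`, and as long as
`𝒢ᵢ` is not terminal, `𝒢_{i+1}` is obtained from `Gᵢ` by deleting the chosen vertex `u i`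
together with all of its neighbors. -/
structure DSeq {V : Type*} [Fintype V] (G : SimpleGraph V) where
  s : ℕ
  hs : 1 ≤ s
  S : ℕ → Finset V
  u : ℕ → V
  first : S 1 = Finset.univ
  mem_u : ∀ i, 1 ≤ i → i < s → u i ∈ core G (S i)
  not_terminal : ∀ i, 1 ≤ i → i < s → ¬ Terminal G (S i)
  step : ∀ i, 1 ≤ i → i < s →
    S (i + 1) = (core G (S i)).filter fun w => w ≠ u i ∧ ¬ G.Adj (u i) w
  terminal : Terminal G (S s)

namespace DSeq

variable {V : Type*} [Fintype V] {G : SimpleGraph V}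

/-- `mᵢ`, the number of isolated vertices of `𝒢ᵢ`. -/
noncomputable def m (D : DSeq G) (i : ℕ) : ℕ := (isolSet G (D.S i)).card

/-- `dᵢ`, the degree in `Gᵢ` of the deleted vertex `u i` (for `i < s`); at the terminal
index it is the minimum degree of `Gₛ` (so `0` if `𝒢ₛ = mₛK₁`, and `r - 1` if `Gₛ = K_r`). -/
noncomputable def d (D : DSeq G) (i : ℕ) : ℕ :=
  if i < D.s then degIn G (D.S i) (D.u i)
  else if h : (core G (D.S i)).Nonempty then (core G (D.S i)).inf' h (degIn G (D.S i)) else 0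

/-- The partial sums `z_i = Σ_{j=2}^i (m_j + 1 - d_j)`. -/
noncomputable def z (D : DSeq G) (i : ℕ) : ℤ :=
  ∑ j ∈ Finset.Icc 2 i, ((D.m j : ℤ) + 1 - (D.d j : ℤ))

/-- A δ-sequence is a d-sequence in which every chosen vertex has minimum degree in `Gᵢ`. -/
def IsDeltaSeq (D : DSeq G) : Prop :=
  ∀ i, 1 ≤ i → i < D.s → ∀ w ∈ core G (D.S i), degIn G (D.S i) (D.u i) ≤ degIn G (D.S i) w

end DSeq


set_option linter.unusedSectionVars false

namespace StrengthAux

open scoped Classical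

variable {V : Type*} [Fintype V] {G : SimpleGraph V}

noncomputable def rk (T : Finset V) (v : V) : ℕ :=
  if h : v ∈ T then (T.equivFin ⟨v, h⟩).val + 1 else 0

lemma rk_pos {T : Finset V} {v : V} (h : v ∈ T) : 1 ≤ rk T v := by simp [rk, h]

lemma rk_le {T : Finset V} {v : V} (h : v ∈ T) : rk T v ≤ T.card := by
  simp only [rk, dif_pos h]
  exact (T.equivFin ⟨v, h⟩).isLt

lemma rk_inj {T : Finset V} {v w : V} (hv : v ∈ T) (hw : w ∈ T)
    (h : rk T v = rk T w) : v = w := by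
  simp only [rk, dif_pos hv, dif_pos hw, add_left_inj] at h
  exact congrArg Subtype.val (T.equivFin.injective (Fin.ext h))

variable (D : DSeq G)

/-- The deleted neighbor set at step `i`. -/
noncomputable def NB (i : ℕ) : Finset V := (D.S i).filter fun w => G.Adj (D.u i) w

/-- cumulative sizes of the neighbor blocks -/
noncomputable def aa (i : ℕ) : ℕ := ∑ j ∈ Finset.Icc 1 i, (NB D j).card

/-- cumulative sizes of the high blocks -/
noncomputable def bb (i : ℕ) : ℕ := ∑ j ∈ Finset.Icc 2 i, (D.m j + 1)

/-- the largest index `i ≤ s` with `v ∈ S i`. -/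
noncomputable def tv (v : V) : ℕ := Nat.findGreatest (fun i => v ∈ D.S i) D.s

/-- the numbering -/
noncomputable def ff (v : V) : ℕ :=
  if tv D v = D.s then
    if v ∈ core G (D.S D.s) then aa D (D.s - 1) + rk (core G (D.S D.s)) v
    else Fintype.card V - (bb D (D.s - 1) + rk (isolSet G (D.S D.s)) v)
  else if v = D.u (tv D v) then Fintype.card V - bb D (tv D v)
  else if G.Adj (D.u (tv D v)) v then aa D (tv D v - 1) + rk (NB D (tv D v)) v
  else Fintype.card V - (bb D (tv D v - 1) + rk (isolSet G (D.S (tv D v))) v)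

lemma aa_mono : Monotone (aa D) := by
  intro i j hij
  exact Finset.sum_le_sum_of_subset (Finset.Icc_subset_Icc_right hij)

lemma bb_mono : Monotone (bb D) := by
  intro i j hij
  exact Finset.sum_le_sum_of_subset (Finset.Icc_subset_Icc_right hij)

lemma aa_succ (i : ℕ) : aa D (i + 1) = aa D i + (NB D (i + 1)).card :=
  Finset.sum_Icc_succ_top (by omega) _

lemma bb_succ (i : ℕ) (hi : 1 ≤ i) : bb D (i + 1) = bb D i + (D.m (i + 1) + 1) :=
  Finset.sum_Icc_succ_top (by omega) _

lemma bb_one : bb D 1 = 0 := by simp [bb]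

lemma bb_strict {i j : ℕ} (hi : 1 ≤ i) (hij : i < j) : bb D i < bb D j := by
  have h1 : bb D (i + 1) = bb D i + (D.m (i + 1) + 1) := bb_succ D i hi
  have h2 : bb D (i + 1) ≤ bb D j := bb_mono D (by omega)
  omega

lemma core_subset (T : Finset V) : core G T ⊆ T := Finset.sdiff_subset

lemma S_succ_subset {i : ℕ} (h1 : 1 ≤ i) (h2 : i < D.s) : D.S (i + 1) ⊆ D.S i := by
  rw [D.step i h1 h2]
  exact (Finset.filter_subset _ _).trans (core_subset _)

lemma S_mono {i j : ℕ} (h1 : 1 ≤ i) (hij : i ≤ j) (hj : j ≤ D.s) : D.S j ⊆ D.S i := by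
  induction j with
  | zero => omega
  | succ k ih =>
    rcases Nat.eq_or_lt_of_le hij with h | h
    · rw [h]
    · exact (S_succ_subset D (by omega) (by omega)).trans (ih (by omega) (by omega))


section Facts

variable [DecidableRel G.Adj]

lemma mem_isol_iff {T : Finset V} {v : V} :
    v ∈ isolSet G T ↔ v ∈ T ∧ ∀ w ∈ T, ¬ G.Adj v w := by
  simp [isolSet]

lemma isol_subset (T : Finset V) : isolSet G T ⊆ T := by
  intro x hx
  exact (mem_isol_iff.mp hx).1

lemma card_core_add (T : Finset V) : (core G T).card + (isolSet G T).card = T.card := by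
  rw [core]
  exact Finset.card_sdiff_add_card_eq_card (isol_subset _)

lemma mem_NB_iff {i : ℕ} {v : V} : v ∈ NB D i ↔ v ∈ D.S i ∧ G.Adj (D.u i) v := by
  simp [NB]

lemma isol_empty_one (hδ : 1 ≤ G.minDegree) : isolSet G (D.S 1) = ∅ := by
  rw [D.first]
  rw [Finset.eq_empty_iff_forall_notMem]
  intro v hv
  rw [mem_isol_iff] at hv
  have h1 : 1 ≤ G.degree v := hδ.trans (G.minDegree_le_degree v)
  obtain ⟨w, hw⟩ := Finset.card_pos.mp h1
  exact hv.2 w (Finset.mem_univ w) (by simpa using hw)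

lemma m_one (hδ : 1 ≤ G.minDegree) : D.m 1 = 0 := by
  simp [DSeq.m, isol_empty_one D hδ]

lemma not_isol_of_adj {T : Finset V} {v w : V} (hw : w ∈ T) (h : G.Adj v w) :
    v ∉ isolSet G T := by
  simp only [isolSet, Finset.mem_filter, not_and, not_forall]
  exact fun _ => ⟨w, hw, by simpa using h⟩

lemma mem_core_iff {T : Finset V} {v : V} : v ∈ core G T ↔ v ∈ T ∧ v ∉ isolSet G T := by
  simp [core]

lemma NB_subset_core {i : ℕ} (h1 : 1 ≤ i) (h2 : i < D.s) : NB D i ⊆ core G (D.S i) := by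
  intro v hv
  rw [mem_NB_iff] at hv
  have hu : D.u i ∈ D.S i := core_subset _ (D.mem_u i h1 h2)
  exact mem_core_iff.mpr ⟨hv.1, not_isol_of_adj hu hv.2.symm⟩

lemma u_not_NB {i : ℕ} : D.u i ∉ NB D i := by
  rw [mem_NB_iff]
  rintro ⟨-, h⟩
  exact G.irrefl h

lemma card_NB {i : ℕ} (h2 : i < D.s) : (NB D i).card = D.d i := by
  simp [DSeq.d, h2, degIn, NB]

/-- one step of vertex counting -/
lemma card_S_succ {i : ℕ} (h1 : 1 ≤ i) (h2 : i < D.s) :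
    (D.S (i + 1)).card + (D.m i + 1 + (NB D i).card) = (D.S i).card := by
  have hstep : D.S (i + 1) = core G (D.S i) \ insert (D.u i) (NB D i) := by
    rw [D.step i h1 h2]
    ext w
    simp only [Finset.mem_filter, Finset.mem_sdiff, Finset.mem_insert, mem_NB_iff, not_or]
    constructor
    · rintro ⟨hw, hne, hadj⟩
      exact ⟨hw, hne, fun h => hadj h.2⟩
    · rintro ⟨hw, hne, hadj⟩
      exact ⟨hw, hne, fun h => hadj ⟨core_subset _ hw, h⟩⟩
  have hins : insert (D.u i) (NB D i) ⊆ core G (D.S i) := by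
    intro w hw
    rcases Finset.mem_insert.mp hw with h | h
    · rw [h]; exact D.mem_u i h1 h2
    · exact NB_subset_core D h1 h2 h
  have hcard1 : (D.S (i + 1)).card + (insert (D.u i) (NB D i)).card = (core G (D.S i)).card := by
    rw [hstep]
    exact Finset.card_sdiff_add_card_eq_card hins
  have hcard2 : (insert (D.u i) (NB D i)).card = (NB D i).card + 1 :=
    Finset.card_insert_of_notMem (u_not_NB D)
  have hcard3 : (core G (D.S i)).card + (isolSet G (D.S i)).card = (D.S i).card :=
    card_core_add _
  have hm : D.m i = (isolSet G (D.S i)).card := rfl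
  omega

/-- the global counting identity -/
lemma count (hδ : 1 ≤ G.minDegree) :
    ∀ k, 1 ≤ k → k + 1 ≤ D.s →
      aa D k + bb D k + 1 + (D.S (k + 1)).card = Fintype.card V := by
  intro k
  induction k with
  | zero => omega
  | succ n ih =>
    intro _ hk1
    rcases Nat.eq_zero_or_pos n with hn | hn
    · subst hn
      simp only [Nat.zero_add] at *
      have h1 : aa D 1 = (NB D 1).card := by simp [aa]
      have h2 := card_S_succ D (le_refl 1) (by omega)
      have h3 : (D.S 1).card = Fintype.card V := by rw [D.first]; exact Finset.card_univ
      have h4 := m_one D hδ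
      have h5 := bb_one D
      omega
    · have ih2 := ih (by omega) (by omega)
      have h1 := aa_succ D n
      have h2 := bb_succ D n hn
      have h3 := card_S_succ D (i := n + 1) (by omega) (by omega)
      omega

lemma card_S_s : (D.S D.s).card = D.m D.s + (core G (D.S D.s)).card := by
  have := card_core_add (G := G) (D.S D.s)
  have hm : D.m D.s = (isolSet G (D.S D.s)).card := rfl
  omega

lemma s_ge_two (hδ : 1 ≤ G.minDegree) (hp : G.minDegree + 2 ≤ Fintype.card V) : 2 ≤ D.s := by
  by_contra h
  have hs1 : D.s = 1 := by have := D.hs; omega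
  have hterm := D.terminal
  rw [hs1] at hterm
  have hcore : core G (D.S 1) = Finset.univ := by
    rw [core, isol_empty_one D hδ, Finset.sdiff_empty, D.first]
  have hp3 : 3 ≤ Fintype.card V := by omega
  rcases hterm with ⟨h1, -⟩ | ⟨-, h2⟩
  · rw [hcore] at h1
    have : Fintype.card V = 0 := by
      simpa [Finset.card_univ] using congrArg Finset.card h1
    omega
  · rw [hcore] at h2
    have hdeg : ∀ v : V, Fintype.card V - 1 ≤ G.degree v := by
      intro v
      have hsub : Finset.univ.erase v ⊆ G.neighborFinset v := by
        intro w hw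
        rw [SimpleGraph.mem_neighborFinset]
        exact (h2 w (Finset.mem_univ w) v (Finset.mem_univ v)
          (Finset.ne_of_mem_erase hw)).symm
      have := Finset.card_le_card hsub
      rw [Finset.card_erase_of_mem (Finset.mem_univ v), Finset.card_univ] at this
      exact this
    have hne : Nonempty V := by
      rw [← Fintype.card_pos_iff]; omega
    have := G.le_minDegree_of_forall_le_degree (Fintype.card V - 1) (fun v => hdeg v)
    omega


lemma tv_le (v : V) : tv D v ≤ D.s := Nat.findGreatest_le _

lemma mem_S_one (v : V) : v ∈ D.S 1 := by rw [D.first]; exact Finset.mem_univ v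

lemma tv_ge_one (v : V) : 1 ≤ tv D v :=
  Nat.le_findGreatest (P := fun i => v ∈ D.S i) D.hs (mem_S_one D v)

lemma mem_tv (v : V) : v ∈ D.S (tv D v) :=
  Nat.findGreatest_spec (P := fun i => v ∈ D.S i) D.hs (mem_S_one D v)

lemma notMem_of_tv_lt {v : V} {j : ℕ} (h1 : tv D v < j) (h2 : j ≤ D.s) : v ∉ D.S j :=
  Nat.findGreatest_is_greatest (P := fun i => v ∈ D.S i) h1 h2

lemma le_tv {v : V} {j : ℕ} (h1 : j ≤ D.s) (h2 : v ∈ D.S j) : j ≤ tv D v :=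
  Nat.le_findGreatest (P := fun i => v ∈ D.S i) h1 h2

lemma tv_lt_cases {v : V} {i : ℕ} (h1 : 1 ≤ i) (h2 : i < D.s) (htv : tv D v = i) :
    v = D.u i ∨ v ∈ NB D i ∨ v ∈ isolSet G (D.S i) := by
  have hvS : v ∈ D.S i := htv ▸ mem_tv D v
  have hnot : v ∉ D.S (i + 1) := notMem_of_tv_lt D (by omega) (by omega)
  simp only [D.step i h1 h2, Finset.mem_filter] at hnot
  by_cases hisol : v ∈ isolSet G (D.S i)
  · exact Or.inr (Or.inr hisol)
  by_cases hu : v = D.u i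
  · exact Or.inl hu
  by_cases hadj : G.Adj (D.u i) v
  · exact Or.inr (Or.inl ((mem_NB_iff D).mpr ⟨hvS, hadj⟩))
  · exact absurd ⟨mem_core_iff.mpr ⟨hvS, hisol⟩, hu, hadj⟩ hnot

lemma tv_s_cases {v : V} (htv : tv D v = D.s) :
    v ∈ core G (D.S D.s) ∨ v ∈ isolSet G (D.S D.s) := by
  have hvS : v ∈ D.S D.s := htv ▸ mem_tv D v
  by_cases hisol : v ∈ isolSet G (D.S D.s)
  · exact Or.inr hisol
  · exact Or.inl (mem_core_iff.mpr ⟨hvS, hisol⟩)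

lemma tv_of_mem_NB {v : V} {i : ℕ} (h1 : 1 ≤ i) (h2 : i < D.s) (hv : v ∈ NB D i) :
    tv D v = i := by
  have h3 : i ≤ tv D v := le_tv D (by omega) ((mem_NB_iff D).mp hv).1
  by_contra hne
  have h4 : v ∈ D.S (i + 1) :=
    S_mono D (by omega) (by omega) (tv_le D v) (mem_tv D v)
  simp only [D.step i h1 h2, Finset.mem_filter] at h4
  exact h4.2.2 ((mem_NB_iff D).mp hv).2

lemma tv_of_u {i : ℕ} (h1 : 1 ≤ i) (h2 : i < D.s) : tv D (D.u i) = i := by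
  have h3 : i ≤ tv D (D.u i) := le_tv D (by omega) (core_subset _ (D.mem_u i h1 h2))
  by_contra hne
  have h4 : D.u i ∈ D.S (i + 1) :=
    S_mono D (by omega) (by omega) (tv_le D _) (mem_tv D _)
  simp only [D.step i h1 h2, Finset.mem_filter] at h4
  exact h4.2.1 rfl

lemma u_not_isol {i : ℕ} (h1 : 1 ≤ i) (h2 : i < D.s) : D.u i ∉ isolSet G (D.S i) :=
  (mem_core_iff.mp (D.mem_u i h1 h2)).2

lemma isol_not_adj_u {v : V} {i : ℕ} (h1 : 1 ≤ i) (h2 : i < D.s)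
    (hv : v ∈ isolSet G (D.S i)) : ¬ G.Adj (D.u i) v := by
  intro h
  exact (mem_isol_iff.mp hv).2 (D.u i) (core_subset _ (D.mem_u i h1 h2)) h.symm

/-- the values of `ff` on the four kinds of blocks -/
lemma ff_N {v : V} {i : ℕ} (h1 : 1 ≤ i) (h2 : i < D.s) (hv : v ∈ NB D i) :
    ff D v = aa D (i - 1) + rk (NB D i) v := by
  have htv : tv D v = i := tv_of_mem_NB D h1 h2 hv
  have hadj : G.Adj (D.u i) v := ((mem_NB_iff D).mp hv).2
  have hne : v ≠ D.u i := fun h => G.irrefl (h ▸ hadj)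
  rw [ff, htv, if_neg (by omega), if_neg hne, if_pos hadj]

lemma ff_u {i : ℕ} (h1 : 1 ≤ i) (h2 : i < D.s) :
    ff D (D.u i) = Fintype.card V - bb D i := by
  have htv : tv D (D.u i) = i := tv_of_u D h1 h2
  rw [ff, htv, if_neg (by omega), if_pos rfl]

lemma ff_I {v : V} {i : ℕ} (h1 : 1 ≤ i) (h2 : i < D.s) (htv : tv D v = i)
    (hv : v ∈ isolSet G (D.S i)) :
    ff D v = Fintype.card V - (bb D (i - 1) + rk (isolSet G (D.S i)) v) := by
  have hne : v ≠ D.u i := fun h => u_not_isol D h1 h2 (h ▸ hv)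
  have hadj : ¬ G.Adj (D.u i) v := isol_not_adj_u D h1 h2 hv
  rw [ff, htv, if_neg (by omega), if_neg hne, if_neg hadj]

lemma ff_K {v : V} (htv : tv D v = D.s) (hv : v ∈ core G (D.S D.s)) :
    ff D v = aa D (D.s - 1) + rk (core G (D.S D.s)) v := by
  rw [ff, htv, if_pos rfl, if_pos hv]

lemma ff_Is {v : V} (htv : tv D v = D.s) (hv : v ∈ isolSet G (D.S D.s)) :
    ff D v = Fintype.card V - (bb D (D.s - 1) + rk (isolSet G (D.S D.s)) v) := by
  have hnc : v ∉ core G (D.S D.s) := fun h => (mem_core_iff.mp h).2 hv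
  rw [ff, htv, if_pos rfl, if_neg hnc]


lemma m_card (i : ℕ) : D.m i = (isolSet G (D.S i)).card := rfl

lemma aa_step {i : ℕ} (h1 : 1 ≤ i) : aa D (i - 1) + (NB D i).card = aa D i := by
  obtain ⟨k, rfl⟩ : ∃ k, i = k + 1 := ⟨i - 1, by omega⟩
  simp [aa_succ D k]

lemma bb_step {i : ℕ} (h1 : 2 ≤ i) : bb D (i - 1) + D.m i + 1 = bb D i := by
  obtain ⟨k, rfl⟩ : ∃ k, i = k + 1 := ⟨i - 1, by omega⟩
  have := bb_succ D k (by omega)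
  simp only [Nat.add_sub_cancel]
  omega

lemma zle (hz : ∀ i, 2 ≤ i → i ≤ D.s → 0 ≤ D.z i) :
    ∀ i, 1 ≤ i → i ≤ D.s → ∑ j ∈ Finset.Icc 2 i, D.d j ≤ bb D i := by
  intro i h1 h2
  rcases Nat.lt_or_ge i 2 with h | h
  · have hi1 : i = 1 := by omega
    subst hi1
    simp [bb, Finset.Icc_eq_empty (show ¬ (2:ℕ) ≤ 1 by omega)]
  · have h0 := hz i h h2
    rw [DSeq.z] at h0
    have heq : ∑ j ∈ Finset.Icc 2 i, ((D.m j : ℤ) + 1 - (D.d j : ℤ))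
        = (bb D i : ℤ) - ∑ j ∈ Finset.Icc 2 i, (D.d j : ℤ) := by
      rw [Finset.sum_sub_distrib, bb]
      push_cast
      ring
    rw [heq, sub_nonneg] at h0
    exact_mod_cast h0

lemma aa_d {i : ℕ} (h2 : i < D.s) : aa D i = ∑ j ∈ Finset.Icc 1 i, D.d j :=
  Finset.sum_congr rfl fun j hj =>
    card_NB D (lt_of_le_of_lt (Finset.mem_Icc.mp hj).2 h2)

lemma sum_d_split {i : ℕ} (h1 : 1 ≤ i) :
    ∑ j ∈ Finset.Icc 1 i, D.d j = D.d 1 + ∑ j ∈ Finset.Icc 2 i, D.d j := by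
  have hins : Finset.Icc 1 i = insert 1 (Finset.Icc 2 i) := by
    ext x
    simp only [Finset.mem_Icc, Finset.mem_insert]
    omega
  rw [hins, Finset.sum_insert (by simp [Finset.mem_Icc])]

lemma aa_le (hz : ∀ i, 2 ≤ i → i ≤ D.s → 0 ≤ D.z i) {i : ℕ} (h1 : 1 ≤ i) (h2 : i < D.s) :
    aa D i ≤ D.d 1 + bb D i := by
  rw [aa_d D h2, sum_d_split D h1]
  have := zle D hz i h1 (le_of_lt h2)
  omega

/-- the key global counting identity -/
lemma KEYP (hδ : 1 ≤ G.minDegree) (hp : G.minDegree + 2 ≤ Fintype.card V) :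
    aa D (D.s - 1) + bb D (D.s - 1) + 1 + D.m D.s + (core G (D.S D.s)).card
      = Fintype.card V := by
  have hs2 := s_ge_two D hδ hp
  have hc := count D hδ (D.s - 1) (by omega) (by omega)
  have he : D.s - 1 + 1 = D.s := by omega
  rw [he] at hc
  have := card_S_s D
  omega

lemma d_s_clique (hcore : (core G (D.S D.s)).Nonempty) :
    D.d D.s = (core G (D.S D.s)).card - 1 ∧ 2 ≤ (core G (D.S D.s)).card ∧
      (∀ v ∈ core G (D.S D.s), ∀ w ∈ core G (D.S D.s), v ≠ w → G.Adj v w) := by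
  rcases D.terminal with ⟨h1, -⟩ | ⟨h1, h2⟩
  · exact absurd hcore (by simp [h1])
  · have hdeg : ∀ v ∈ core G (D.S D.s),
        degIn G (D.S D.s) v = (core G (D.S D.s)).card - 1 := by
      intro v hv
      have hfe : degIn G (D.S D.s) v = ((core G (D.S D.s)).erase v).card := by
        rw [degIn]
        congr 1
        ext w
        simp only [Finset.mem_filter, Finset.mem_erase]
        constructor
        · rintro ⟨hwS, hadj⟩
          exact ⟨(G.ne_of_adj hadj).symm,
            mem_core_iff.mpr ⟨hwS, not_isol_of_adj (core_subset _ hv) hadj.symm⟩⟩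
        · rintro ⟨hne, hw⟩
          exact ⟨core_subset _ hw, h2 v hv w hw (Ne.symm hne)⟩
      rw [hfe, Finset.card_erase_of_mem hv]
    refine ⟨?_, h1, h2⟩
    rw [DSeq.d, if_neg (lt_irrefl D.s), dif_pos hcore]
    apply le_antisymm
    · obtain ⟨v, hv⟩ := hcore
      exact (Finset.inf'_le _ hv).trans_eq (hdeg v hv)
    · exact Finset.le_inf' _ _ fun v hv => (hdeg v hv).ge

/-- the key inequality for the low labels -/
lemma KEY1 (hδ : 1 ≤ G.minDegree) (hp : G.minDegree + 2 ≤ Fintype.card V)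
    (hz : ∀ i, 2 ≤ i → i ≤ D.s → 0 ≤ D.z i) :
    aa D (D.s - 1) + (core G (D.S D.s)).card
      ≤ bb D (D.s - 1) + D.m D.s + D.d 1 + 2 := by
  have hs2 := s_ge_two D hδ hp
  by_cases hcore : (core G (D.S D.s)).Nonempty
  · obtain ⟨hds, hr, -⟩ := d_s_clique D hcore
    have hzs := zle D hz D.s (by omega) (le_refl _)
    have hsplit : ∑ j ∈ Finset.Icc 2 D.s, D.d j
        = ∑ j ∈ Finset.Icc 2 (D.s - 1), D.d j + D.d D.s := by
      obtain ⟨k, hk⟩ : ∃ k, D.s = k + 1 := ⟨D.s - 1, by omega⟩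
      rw [hk]
      simp only [Nat.add_sub_cancel]
      exact Finset.sum_Icc_succ_top (by omega) _
    have haa : aa D (D.s - 1) = D.d 1 + ∑ j ∈ Finset.Icc 2 (D.s - 1), D.d j := by
      rw [aa_d D (by omega), sum_d_split D (by omega)]
    have hbs : bb D (D.s - 1) + D.m D.s + 1 = bb D D.s := bb_step D (by omega)
    omega
  · have hc0 : (core G (D.S D.s)).card = 0 := by
      rw [Finset.not_nonempty_iff_eq_empty] at hcore
      simp [hcore]
    have := aa_le D hz (i := D.s - 1) (by omega) (by omega)
    omega


/-- classification of vertices into the four kinds of blocks, with `ff`-values -/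
lemma classify (hδ : 1 ≤ G.minDegree) (hp : G.minDegree + 2 ≤ Fintype.card V) (v : V) :
    (∃ i, 1 ≤ i ∧ i < D.s ∧ v ∈ NB D i ∧ ff D v = aa D (i - 1) + rk (NB D i) v) ∨
    (∃ i, 1 ≤ i ∧ i < D.s ∧ v = D.u i ∧ ff D v = Fintype.card V - bb D i) ∨
    (∃ i, 2 ≤ i ∧ i ≤ D.s ∧ v ∈ isolSet G (D.S i) ∧
      ff D v = Fintype.card V - (bb D (i - 1) + rk (isolSet G (D.S i)) v)) ∨
    (v ∈ core G (D.S D.s) ∧ ff D v = aa D (D.s - 1) + rk (core G (D.S D.s)) v) := by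
  have h1 := tv_ge_one D v
  have h2 := tv_le D v
  rcases Nat.eq_or_lt_of_le h2 with he | hlt
  · rcases tv_s_cases D he with hc | his
    · exact Or.inr (Or.inr (Or.inr ⟨hc, ff_K D he hc⟩))
    · exact Or.inr (Or.inr (Or.inl ⟨D.s, s_ge_two D hδ hp, le_refl _, his, ff_Is D he his⟩))
  · rcases tv_lt_cases D h1 hlt rfl with hu | hN | hI
    · refine Or.inr (Or.inl ⟨tv D v, h1, hlt, hu, ?_⟩)
      have hval := ff_u D (i := tv D v) h1 hlt
      rw [← hu] at hval
      exact hval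
    · exact Or.inl ⟨tv D v, h1, hlt, hN, ff_N D h1 hlt hN⟩
    · refine Or.inr (Or.inr (Or.inl ⟨tv D v, ?_, le_of_lt hlt, hI, ff_I D h1 hlt rfl hI⟩))
      by_contra hc
      have htv1 : tv D v = 1 := by omega
      rw [htv1, isol_empty_one D hδ] at hI
      exact absurd hI (Finset.notMem_empty v)

/-- bound for the position of an isolated-block label -/
lemma qI_le {i : ℕ} {v : V} (h2a : 2 ≤ i) (h2b : i ≤ D.s) (hv : v ∈ isolSet G (D.S i)) :
    bb D (i - 1) + rk (isolSet G (D.S i)) v ≤ bb D (D.s - 1) + D.m D.s := by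
  have hrk := rk_le hv
  rcases Nat.eq_or_lt_of_le h2b with he | hlt
  · subst he
    have := m_card D D.s
    omega
  · have hstep : bb D (i - 1) + D.m i + 1 = bb D i := bb_step D h2a
    have hmono : bb D i ≤ bb D (D.s - 1) := bb_mono D (by omega)
    have := m_card D i
    omega

/-- injectivity of the labeling -/
lemma ff_inj (hδ : 1 ≤ G.minDegree) (hp : G.minDegree + 2 ≤ Fintype.card V)
    {x y : V} (h : ff D x = ff D y) : x = y := by
  have hKEYP := KEYP D hδ hp
  have hs2 := s_ge_two D hδ hp
  rcases classify D hδ hp x with ⟨i, hi1, hi2, hxN, hfx⟩ | ⟨i, hi1, hi2, hxu, hfx⟩ |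
      ⟨i, hi1, hi2, hxI, hfx⟩ | ⟨hxK, hfx⟩ <;>
    rcases classify D hδ hp y with ⟨j, hj1, hj2, hyN, hfy⟩ | ⟨j, hj1, hj2, hyu, hfy⟩ |
      ⟨j, hj1, hj2, hyI, hfy⟩ | ⟨hyK, hfy⟩
  -- N N
  · rcases Nat.lt_trichotomy i j with hij | hij | hij
    · exfalso
      have hb1 : aa D (i - 1) + (NB D i).card = aa D i := aa_step D hi1
      have hb2 := rk_le hxN
      have hb3 := rk_pos hyN
      have hb4 : aa D i ≤ aa D (j - 1) := aa_mono D (by omega)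
      omega
    · subst hij
      rw [hfx, hfy] at h
      exact rk_inj hxN hyN (by omega)
    · exfalso
      have hb1 : aa D (j - 1) + (NB D j).card = aa D j := aa_step D hj1
      have hb2 := rk_le hyN
      have hb3 := rk_pos hxN
      have hb4 : aa D j ≤ aa D (i - 1) := aa_mono D (by omega)
      omega
  -- N u
  · exfalso
    have hb1 : aa D (i - 1) + (NB D i).card = aa D i := aa_step D hi1
    have hb2 := rk_le hxN
    have hb3 : aa D i ≤ aa D (D.s - 1) := aa_mono D (by omega)
    have hb4 : bb D j ≤ bb D (D.s - 1) := bb_mono D (by omega)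
    omega
  -- N I
  · exfalso
    have hb1 : aa D (i - 1) + (NB D i).card = aa D i := aa_step D hi1
    have hb2 := rk_le hxN
    have hb3 : aa D i ≤ aa D (D.s - 1) := aa_mono D (by omega)
    have hb4 := qI_le D hj1 hj2 hyI
    omega
  -- N K
  · exfalso
    have hb1 : aa D (i - 1) + (NB D i).card = aa D i := aa_step D hi1
    have hb2 := rk_le hxN
    have hb3 : aa D i ≤ aa D (D.s - 1) := aa_mono D (by omega)
    have hb4 := rk_pos hyK
    omega
  -- u N
  · exfalso
    have hb1 : aa D (j - 1) + (NB D j).card = aa D j := aa_step D hj1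
    have hb2 := rk_le hyN
    have hb3 : aa D j ≤ aa D (D.s - 1) := aa_mono D (by omega)
    have hb4 : bb D i ≤ bb D (D.s - 1) := bb_mono D (by omega)
    omega
  -- u u
  · have hb1 : bb D i ≤ bb D (D.s - 1) := bb_mono D (by omega)
    have hb2 : bb D j ≤ bb D (D.s - 1) := bb_mono D (by omega)
    have hbij : bb D i = bb D j := by omega
    rcases Nat.lt_trichotomy i j with hij | hij | hij
    · exact absurd (bb_strict D hi1 hij) (by omega)
    · subst hij
      rw [hxu, hyu]
    · exact absurd (bb_strict D hj1 hij) (by omega)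
  -- u I
  · exfalso
    have hb1 : bb D i ≤ bb D (D.s - 1) := bb_mono D (by omega)
    have hb2 := qI_le D hj1 hj2 hyI
    have hb3 := rk_pos hyI
    rcases Nat.lt_or_ge i j with hij | hij
    · have : bb D i ≤ bb D (j - 1) := bb_mono D (by omega)
      omega
    · have hstep : bb D (j - 1) + D.m j + 1 = bb D j := bb_step D hj1
      have : bb D j ≤ bb D i := bb_mono D hij
      have := rk_le hyI
      have := m_card D j
      omega
  -- u K
  · exfalso
    have hb1 : bb D i ≤ bb D (D.s - 1) := bb_mono D (by omega)
    have hb2 := rk_le hyK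
    omega
  -- I N
  · exfalso
    have hb1 : aa D (j - 1) + (NB D j).card = aa D j := aa_step D hj1
    have hb2 := rk_le hyN
    have hb3 : aa D j ≤ aa D (D.s - 1) := aa_mono D (by omega)
    have hb4 := qI_le D hi1 hi2 hxI
    omega
  -- I u
  · exfalso
    have hb1 : bb D j ≤ bb D (D.s - 1) := bb_mono D (by omega)
    have hb2 := qI_le D hi1 hi2 hxI
    have hb3 := rk_pos hxI
    rcases Nat.lt_or_ge j i with hij | hij
    · have : bb D j ≤ bb D (i - 1) := bb_mono D (by omega)
      omega
    · have hstep : bb D (i - 1) + D.m i + 1 = bb D i := bb_step D hi1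
      have : bb D i ≤ bb D j := bb_mono D hij
      have := rk_le hxI
      have := m_card D i
      omega
  -- I I
  · have hb1 := qI_le D hi1 hi2 hxI
    have hb2 := qI_le D hj1 hj2 hyI
    have hb3 := rk_pos hxI
    have hb4 := rk_pos hyI
    rcases Nat.lt_trichotomy i j with hij | hij | hij
    · exfalso
      have hstep : bb D (i - 1) + D.m i + 1 = bb D i := bb_step D hi1
      have hm : bb D i ≤ bb D (j - 1) := bb_mono D (by omega)
      have := rk_le hxI
      have := m_card D i
      omega
    · subst hij
      exact rk_inj hxI hyI (by omega)
    · exfalso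
      have hstep : bb D (j - 1) + D.m j + 1 = bb D j := bb_step D hj1
      have hm : bb D j ≤ bb D (i - 1) := bb_mono D (by omega)
      have := rk_le hyI
      have := m_card D j
      omega
  -- I K
  · exfalso
    have hb1 := qI_le D hi1 hi2 hxI
    have hb2 := rk_le hyK
    have hb3 := rk_pos hxI
    omega
  -- K N
  · exfalso
    have hb1 : aa D (j - 1) + (NB D j).card = aa D j := aa_step D hj1
    have hb2 := rk_le hyN
    have hb3 : aa D j ≤ aa D (D.s - 1) := aa_mono D (by omega)
    have hb4 := rk_pos hxK
    omega
  -- K u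
  · exfalso
    have hb1 : bb D j ≤ bb D (D.s - 1) := bb_mono D (by omega)
    have hb2 := rk_le hxK
    omega
  -- K I
  · exfalso
    have hb1 := qI_le D hj1 hj2 hyI
    have hb2 := rk_le hxK
    have hb3 := rk_pos hyI
    omega
  -- K K
  · rw [hfx, hfy] at h
    exact rk_inj hxK hyK (by omega)


lemma tv_of_isol {i : ℕ} {v : V} (h1 : 1 ≤ i) (h2 : i ≤ D.s) (hv : v ∈ isolSet G (D.S i)) :
    tv D v = i := by
  have hle : i ≤ tv D v := le_tv D h2 (isol_subset _ hv)
  rcases Nat.eq_or_lt_of_le h2 with he | hlt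
  · have := tv_le D v
    omega
  · by_contra hne
    have h4 : v ∈ D.S (i + 1) :=
      S_mono D (by omega) (by omega) (tv_le D v) (mem_tv D v)
    simp only [D.step i h1 hlt, Finset.mem_filter] at h4
    exact (mem_core_iff.mp h4.1).2 hv

lemma tv_of_core_s {v : V} (hv : v ∈ core G (D.S D.s)) : tv D v = D.s :=
  le_antisymm (tv_le D v) (le_tv D (le_refl _) (core_subset _ hv))

/-- an edge going down from `x` lands in a neighbor block -/
lemma adj_tv_lt {x y : V} (hadj : G.Adj x y) (hlt : tv D y < tv D x) :
    y ∈ NB D (tv D y) ∧ tv D y < D.s := by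
  have hj1 : 1 ≤ tv D y := tv_ge_one D y
  have hjs : tv D y < D.s := lt_of_lt_of_le hlt (tv_le D x)
  have hxSj1 : x ∈ D.S (tv D y + 1) :=
    S_mono D (by omega) (by omega) (tv_le D x) (mem_tv D x)
  rcases tv_lt_cases D hj1 hjs rfl with hu | hN | hI
  · exfalso
    simp only [D.step _ hj1 hjs, Finset.mem_filter] at hxSj1
    exact hxSj1.2.2 (hu ▸ hadj.symm)
  · exact ⟨hN, hjs⟩
  · exfalso
    exact (mem_isol_iff.mp hI).2 x (S_succ_subset D hj1 hjs hxSj1) hadj.symm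

/-- edges out of an isolated vertex go to strictly earlier neighbor blocks -/
lemma adj_isol {x y : V} {j : ℕ} (hadj : G.Adj x y) (h1 : 1 ≤ j) (h2 : j ≤ D.s)
    (hy : y ∈ isolSet G (D.S j)) : x ∈ NB D (tv D x) ∧ tv D x < j := by
  have htvy : tv D y = j := tv_of_isol D h1 h2 hy
  have hxnot : x ∉ D.S j := fun hx => (mem_isol_iff.mp hy).2 x hx hadj.symm
  have hlt : tv D x < j := by
    by_contra hge
    exact hxnot (S_mono D h1 (by omega) (tv_le D x) (mem_tv D x))
  have := adj_tv_lt D hadj.symm (htvy ▸ hlt)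
  exact ⟨this.1, hlt⟩

/-- edges out of `u i` go to neighbor blocks with index at most `i` -/
lemma adj_u {y : V} {i : ℕ} (h1 : 1 ≤ i) (h2 : i < D.s) (hadj : G.Adj (D.u i) y) :
    y ∈ NB D (tv D y) ∧ tv D y ≤ i := by
  have htvx : tv D (D.u i) = i := tv_of_u D h1 h2
  rcases Nat.lt_trichotomy (tv D y) i with hlt | heq | hgt
  · have := adj_tv_lt D hadj (by omega)
    exact ⟨this.1, by omega⟩
  · refine ⟨?_, by omega⟩
    rw [heq]
    exact (mem_NB_iff D).mpr ⟨heq ▸ mem_tv D y, hadj⟩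
  · exfalso
    have := (adj_tv_lt D hadj.symm (by omega)).1
    rw [htvx] at this
    exact u_not_NB D this

/-- edges out of the terminal clique go to the clique or to neighbor blocks -/
lemma adj_core_s {x y : V} (hadj : G.Adj x y) (hx : x ∈ core G (D.S D.s)) :
    y ∈ core G (D.S D.s) ∨ (y ∈ NB D (tv D y) ∧ tv D y < D.s) := by
  have htvx : tv D x = D.s := tv_of_core_s D hx
  rcases Nat.eq_or_lt_of_le (tv_le D y) with he | hlt
  · left
    have hyS : y ∈ D.S D.s := he ▸ mem_tv D y
    exact mem_core_iff.mpr ⟨hyS, fun h =>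
      (mem_isol_iff.mp h).2 x (core_subset _ hx) hadj.symm⟩
  · right
    exact adj_tv_lt D hadj (by omega)

lemma ff_le_A (hδ : 1 ≤ G.minDegree) (hp : G.minDegree + 2 ≤ Fintype.card V) {v : V}
    (h : (∃ i, 1 ≤ i ∧ i < D.s ∧ v ∈ NB D i) ∨ v ∈ core G (D.S D.s)) :
    ff D v ≤ aa D (D.s - 1) + (core G (D.S D.s)).card := by
  rcases h with ⟨i, hi1, hi2, hv⟩ | hv
  · rw [ff_N D hi1 hi2 hv]
    have hb1 : aa D (i - 1) + (NB D i).card = aa D i := aa_step D hi1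
    have hb2 := rk_le hv
    have hb3 : aa D i ≤ aa D (D.s - 1) := aa_mono D (by omega)
    omega
  · rw [ff_K D (tv_of_core_s D hv) hv]
    have := rk_le hv
    omega

lemma lowlow (hδ : 1 ≤ G.minDegree) (hp : G.minDegree + 2 ≤ Fintype.card V)
    (hz : ∀ i, 2 ≤ i → i ≤ D.s → 0 ≤ D.z i) {x y : V}
    (hx : (∃ i, 1 ≤ i ∧ i < D.s ∧ x ∈ NB D i) ∨ x ∈ core G (D.S D.s))
    (hy : (∃ i, 1 ≤ i ∧ i < D.s ∧ y ∈ NB D i) ∨ y ∈ core G (D.S D.s))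
    (hne : x ≠ y) : ff D x + ff D y ≤ Fintype.card V + D.d 1 := by
  have h1 := ff_le_A D hδ hp hx
  have h2 := ff_le_A D hδ hp hy
  have hne2 : ff D x ≠ ff D y := fun h => hne (ff_inj D hδ hp h)
  have hKEY1 := KEY1 D hδ hp hz
  have hKEYP := KEYP D hδ hp
  omega

/-- the main edge bound -/
lemma edge_le (hδ : 1 ≤ G.minDegree) (hp : G.minDegree + 2 ≤ Fintype.card V)
    (hz : ∀ i, 2 ≤ i → i ≤ D.s → 0 ≤ D.z i) {x y : V} (hadj : G.Adj x y) :
    ff D x + ff D y ≤ Fintype.card V + D.d 1 := by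
  have hKEYP := KEYP D hδ hp
  have hs2 := s_ge_two D hδ hp
  rcases classify D hδ hp x with ⟨i, hi1, hi2, hxN, hfx⟩ | ⟨i, hi1, hi2, hxu, hfx⟩ |
      ⟨i, hi1, hi2, hxI, hfx⟩ | ⟨hxK, hfx⟩
  · -- x in a neighbor block : x is low
    rcases classify D hδ hp y with ⟨j, hj1, hj2, hyN, hfy⟩ | ⟨j, hj1, hj2, hyu, hfy⟩ |
        ⟨j, hj1, hj2, hyI, hfy⟩ | ⟨hyK, hfy⟩
    · exact lowlow D hδ hp hz (Or.inl ⟨i, hi1, hi2, hxN⟩) (Or.inl ⟨j, hj1, hj2, hyN⟩) hadj.ne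
    · -- y = u j
      obtain ⟨hxN', hle⟩ := adj_u D hj1 hj2 (hyu ▸ hadj.symm)
      have htvx : tv D x = i := tv_of_mem_NB D hi1 hi2 hxN
      rw [htvx] at hle
      have hb0 : aa D (i - 1) + (NB D i).card = aa D i := aa_step D hi1
      have hb1 := rk_le hxN
      have hb2 : aa D i ≤ aa D j := aa_mono D hle
      have hb3 := aa_le D hz hj1 hj2
      have hb4 : bb D j ≤ bb D (D.s - 1) := bb_mono D (by omega)
      omega
    · -- y isolated at level j
      obtain ⟨-, hlt⟩ := adj_isol D hadj (by omega) hj2 hyI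
      have htvx : tv D x = i := tv_of_mem_NB D hi1 hi2 hxN
      rw [htvx] at hlt
      have hb0 : aa D (i - 1) + (NB D i).card = aa D i := aa_step D hi1
      have hb1 := rk_le hxN
      have hb2 : aa D i ≤ aa D (j - 1) := aa_mono D (by omega)
      have hb3 := aa_le D hz (i := j - 1) (by omega) (by omega)
      have hb4 := qI_le D hj1 hj2 hyI
      have hb5 := rk_pos hyI
      omega
    · exact lowlow D hδ hp hz (Or.inl ⟨i, hi1, hi2, hxN⟩) (Or.inr hyK) hadj.ne
  · -- x = u i
    obtain ⟨hyN, hle⟩ := adj_u D hi1 hi2 (hxu ▸ hadj)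
    have hb0 : aa D (tv D y - 1) + (NB D (tv D y)).card = aa D (tv D y) :=
      aa_step D (tv_ge_one D y)
    have hb1 := rk_le hyN
    have hb2 : aa D (tv D y) ≤ aa D i := aa_mono D hle
    have hb3 := aa_le D hz hi1 hi2
    have hb4 : bb D i ≤ bb D (D.s - 1) := bb_mono D (by omega)
    have hfy : ff D y = aa D (tv D y - 1) + rk (NB D (tv D y)) y :=
      ff_N D (tv_ge_one D y) (by omega) hyN
    omega
  · -- x isolated at level i
    obtain ⟨hyN, hlt⟩ := adj_isol D hadj.symm (by omega) hi2 hxI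
    have hb0 : aa D (tv D y - 1) + (NB D (tv D y)).card = aa D (tv D y) :=
      aa_step D (tv_ge_one D y)
    have hb1 := rk_le hyN
    have hb2 : aa D (tv D y) ≤ aa D (i - 1) := aa_mono D (by omega)
    have hb3 := aa_le D hz (i := i - 1) (by omega) (by omega)
    have hb4 := qI_le D hi1 hi2 hxI
    have hb5 := rk_pos hxI
    have hfy : ff D y = aa D (tv D y - 1) + rk (NB D (tv D y)) y :=
      ff_N D (tv_ge_one D y) (by omega) hyN
    omega
  · -- x in the terminal clique
    rcases adj_core_s D hadj hxK with hyK | ⟨hyN, hlt⟩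
    · exact lowlow D hδ hp hz (Or.inr hxK) (Or.inr hyK) hadj.ne
    · exact lowlow D hδ hp hz (Or.inr hxK)
        (Or.inl ⟨tv D y, tv_ge_one D y, hlt, hyN⟩) hadj.ne


lemma ff_mem (hδ : 1 ≤ G.minDegree) (hp : G.minDegree + 2 ≤ Fintype.card V) (v : V) :
    1 ≤ ff D v ∧ ff D v ≤ Fintype.card V := by
  have hKEYP := KEYP D hδ hp
  have hs2 := s_ge_two D hδ hp
  rcases classify D hδ hp v with ⟨i, hi1, hi2, hvN, hfv⟩ | ⟨i, hi1, hi2, hvu, hfv⟩ |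
      ⟨i, hi1, hi2, hvI, hfv⟩ | ⟨hvK, hfv⟩
  · have hb0 : aa D (i - 1) + (NB D i).card = aa D i := aa_step D hi1
    have hb1 := rk_le hvN
    have hb2 := rk_pos hvN
    have hb3 : aa D i ≤ aa D (D.s - 1) := aa_mono D (by omega)
    omega
  · have hb1 : bb D i ≤ bb D (D.s - 1) := bb_mono D (by omega)
    omega
  · have hb1 := qI_le D hi1 hi2 hvI
    omega
  · have hb1 := rk_le hvK
    have hb2 := rk_pos hvK
    omega

lemma ff_numbering (hδ : 1 ≤ G.minDegree) (hp : G.minDegree + 2 ≤ Fintype.card V) :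
    IsNumbering (ff D) := by
  have hinj : Function.Injective (ff D) := fun x y h => ff_inj D hδ hp h
  have hmaps : ∀ v, ff D v ∈ Finset.Icc 1 (Fintype.card V) := fun v =>
    Finset.mem_Icc.mpr (ff_mem D hδ hp v)
  have himage : Finset.image (ff D) Finset.univ = Finset.Icc 1 (Fintype.card V) := by
    apply Finset.eq_of_subset_of_card_le
    · intro n hn
      obtain ⟨v, -, rfl⟩ := Finset.mem_image.mp hn
      exact hmaps v
    · rw [Finset.card_image_of_injective _ hinj, Finset.card_univ, Nat.card_Icc]
      omega
  refine ⟨fun v _ => Set.mem_Icc.mpr (Finset.mem_Icc.mp (hmaps v)), fun a _ b _ h => hinj h,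
    fun n hn => ?_⟩
  have hn2 : n ∈ Finset.Icc 1 (Fintype.card V) := Finset.mem_Icc.mpr (Set.mem_Icc.mp hn)
  rw [← himage] at hn2
  obtain ⟨v, -, rfl⟩ := Finset.mem_image.mp hn2
  exact ⟨v, Set.mem_univ v, rfl⟩

/-- Existence of an edge. -/
lemma exists_edge (hδ : 1 ≤ G.minDegree) (hp : G.minDegree + 2 ≤ Fintype.card V) :
    ∃ x y : V, G.Adj x y := by
  have hne : Nonempty V := by rw [← Fintype.card_pos_iff]; omega
  obtain ⟨v⟩ := hne
  have h1 : 1 ≤ G.degree v := hδ.trans (G.minDegree_le_degree v)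
  obtain ⟨w, hw⟩ := Finset.card_pos.mp h1
  exact ⟨v, w, by simpa using hw⟩

/-- Any numbering has strength at least `p + δ`. -/
lemma lower_bound (hδ : 1 ≤ G.minDegree) (hp : G.minDegree + 2 ≤ Fintype.card V)
    (g : V → ℕ) (hg : IsNumbering g) :
    Fintype.card V + G.minDegree ≤ strOf G g := by
  obtain ⟨hmaps, hinj, hsurj⟩ := hg
  have hp1 : 1 ≤ Fintype.card V := by omega
  obtain ⟨v, -, hv⟩ := hsurj (Set.mem_Icc.mpr ⟨hp1, le_refl _⟩)
  -- v has label p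
  have hdeg : 1 ≤ G.degree v := hδ.trans (G.minDegree_le_degree v)
  have hTne : (G.neighborFinset v).Nonempty := Finset.card_pos.mp hdeg
  have hIne : ((G.neighborFinset v).image g).Nonempty := hTne.image g
  set M := ((G.neighborFinset v).image g).max' hIne with hM
  obtain ⟨w, hwT, hwM⟩ := Finset.mem_image.mp (Finset.max'_mem _ hIne)
  have hMge : G.minDegree ≤ M := by
    have hsub : (G.neighborFinset v).image g ⊆ Finset.Icc 1 M := by
      intro n hn
      obtain ⟨u, -, rfl⟩ := Finset.mem_image.mp hn
      exact Finset.mem_Icc.mpr ⟨(Set.mem_Icc.mp (hmaps (Set.mem_univ u))).1,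
        Finset.le_max' _ _ hn⟩
    have hcard : ((G.neighborFinset v).image g).card = G.degree v := by
      rw [Finset.card_image_of_injOn (fun a _ b _ h => hinj (Set.mem_univ a)
        (Set.mem_univ b) h)]
      rfl
    have := Finset.card_le_card hsub
    rw [hcard, Nat.card_Icc] at this
    have := G.minDegree_le_degree v
    omega
  have hadj : G.Adj v w := (SimpleGraph.mem_neighborFinset G v w).mp hwT
  have hmem : g v + g w ∈ {n | ∃ u u', G.Adj u u' ∧ n = g u + g u'} := ⟨v, w, hadj, rfl⟩
  have hbdd : BddAbove {n | ∃ u u', G.Adj u u' ∧ n = g u + g u'} := by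
    refine ⟨2 * Fintype.card V, ?_⟩
    rintro n ⟨a, b, -, rfl⟩
    have ha := (Set.mem_Icc.mp (hmaps (Set.mem_univ a))).2
    have hb := (Set.mem_Icc.mp (hmaps (Set.mem_univ b))).2
    omega
  have hle : g v + g w ≤ strOf G g := le_csSup hbdd hmem
  rw [hv, hwM] at hle
  omega

/-- The strength of our numbering is at most `p + d₁`. -/
lemma strOf_le (hδ : 1 ≤ G.minDegree) (hp : G.minDegree + 2 ≤ Fintype.card V)
    (hz : ∀ i, 2 ≤ i → i ≤ D.s → 0 ≤ D.z i) :
    strOf G (ff D) ≤ Fintype.card V + D.d 1 := by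
  apply csSup_le
  · obtain ⟨x, y, hxy⟩ := exists_edge (G := G) hδ hp
    exact ⟨ff D x + ff D y, x, y, hxy, rfl⟩
  · rintro n ⟨x, y, hadj, rfl⟩
    exact edge_le D hδ hp hz hadj

end Facts

end StrengthAux

/-- If `G` has order `p` with `p - 2 ≥ δ(G) ≥ 1` and admits a d-sequence whose partial sums
`zᵢ = Σ_{j=2}^i (mⱼ + 1 - dⱼ)` are all nonnegative for `2 ≤ i ≤ s`, then
`str(G) ≤ p + d_G` where `d_G = d₁`; moreover if `d_G = δ(G)` then `str(G) = p + δ(G)`. -/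
theorem strength_le_of_dSeq {V : Type*} [Fintype V] (G : SimpleGraph V)
    [DecidableRel G.Adj] (hδ : 1 ≤ G.minDegree)
    (hp : G.minDegree + 2 ≤ Fintype.card V)
    (D : DSeq G) (hz : ∀ i, 2 ≤ i → i ≤ D.s → 0 ≤ D.z i) :
    strength G ≤ Fintype.card V + D.d 1 ∧
      (D.d 1 = G.minDegree → strength G = Fintype.card V + G.minDegree) := by
  have hnum := StrengthAux.ff_numbering D hδ hp
  have hstr := StrengthAux.strOf_le D hδ hp hz
  have hmem : strOf G (StrengthAux.ff D) ∈
      {n | ∃ f : V → ℕ, IsNumbering f ∧ strOf G f = n} := ⟨StrengthAux.ff D, hnum, rfl⟩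
  have hub : strength G ≤ Fintype.card V + D.d 1 :=
    le_trans (csInf_le (OrderBot.bddBelow _) hmem) hstr
  refine ⟨hub, fun hd => ?_⟩
  apply le_antisymm
  · rw [← hd]; exact hub
  · apply le_csInf ⟨strOf G (StrengthAux.ff D), hmem⟩
    rintro n ⟨g, hg, rfl⟩
    exact StrengthAux.lower_bound hδ hp g hg
end

section
/- If G is a wheel graph or a fan graph of order p, then str(G) = p + δ(G). -/
open Finset

open scoped Classical

/-- The cone over a graph: a new vertex (`none`) joined to every vertex of `G`. -/
def coneGraph {α : Type*} (G : SimpleGraph α) : SimpleGraph (Option α) where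
  Adj x y :=
    match x, y with
    | none, none => False
    | none, some _ => True
    | some _, none => True
    | some a, some b => G.Adj a b
  symm := by
    refine ⟨?_⟩
    rintro (_ | a) (_ | b) h
    · exact h
    · trivial
    · trivial
    · exact G.adj_symm h
  loopless := by
    refine ⟨?_⟩
    rintro (_ | a) h
    · exact h
    · exact G.irrefl h

/-- The wheel graph of order `p`: the cone over the cycle `C_{p-1}`. -/
def wheelGraph (p : ℕ) : SimpleGraph (Option (Fin (p - 1))) :=
  coneGraph (SimpleGraph.cycleGraph (p - 1))

/-- The fan graph of order `p`: the cone over the path `P_{p-1}`. -/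
def fanGraph (p : ℕ) : SimpleGraph (Option (Fin (p - 1))) :=
  coneGraph (SimpleGraph.pathGraph (p - 1))

/-!
Every numbering has strength at least `p + δ`: the vertex numbered `p` has at least `δ`
neighbours, which carry distinct positive numbers, so one of them is numbered at least `δ`.
Wheels and fans are cones over a cycle and a path, with `δ = 3` and `δ = 2`. Numbering the apex `1`
and the base vertices in the zigzag order `2, p, 3, p - 1, …` gives consecutive sums `p + 2` and
`p + 3` (and `p + 2` across the closing edge of the cycle); on the path the reflected order
`p, 2, p - 1, 3, …` gives sums `p + 1` and `p + 2`. So the lower bound is attained in both cases.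
-/

open Function SimpleGraph

section Numbering

variable {V : Type*} [Fintype V] {G : SimpleGraph V} {f : V → ℕ}

lemma isNumbering_of_injective (hf : Injective f) (hmem : ∀ v, f v ∈ Set.Icc 1 (Fintype.card V)) :
    IsNumbering f := by
  classical
  have himage : univ.image f = Finset.Icc 1 (Fintype.card V) :=
    eq_of_subset_of_card_le (fun _ hn ↦ by
      obtain ⟨v, -, rfl⟩ := mem_image.mp hn
      simpa using hmem v)
      (by simp [card_image_of_injective _ hf])
  refine ⟨fun v _ ↦ hmem v, hf.injOn, fun n hn ↦ ?_⟩
  rwa [← coe_Icc, ← himage, coe_image, coe_univ] at hn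

lemma le_strOf {u v : V} (h : G.Adj u v) : f u + f v ≤ strOf G f := by
  have hfin : {n | ∃ u v, G.Adj u v ∧ n = f u + f v}.Finite :=
    (Set.finite_range fun x : V × V ↦ f x.1 + f x.2).subset
      fun _ ⟨u, v, _, hn⟩ ↦ ⟨(u, v), hn.symm⟩
  exact le_csSup hfin.bddAbove ⟨u, v, h, rfl⟩

lemma strOf_le {m : ℕ} (h : ∀ u v, G.Adj u v → f u + f v ≤ m) : strOf G f ≤ m :=
  csSup_le' fun _ ⟨u, v, huv, hn⟩ ↦ hn ▸ h u v huv

lemma card_add_minDegree_le_strOf [DecidableRel G.Adj] (hδ : 0 < G.minDegree)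
    (hf : IsNumbering f) : Fintype.card V + G.minDegree ≤ strOf G f := by
  have hV : 0 < Fintype.card V := by
    by_contra! hV
    have : IsEmpty V := Fintype.card_eq_zero_iff.mp (by omega)
    simp [minDegree_of_subsingleton] at hδ
  obtain ⟨v, -, hv⟩ := hf.surjOn (Set.mem_Icc.mpr ⟨hV, le_rfl⟩)
  by_contra! hlt
  have hnbr : Set.MapsTo f (G.neighborFinset v) (Finset.Icc 1 (G.minDegree - 1)) := fun w hw ↦ by
    have hvw := le_strOf (f := f) ((G.mem_neighborFinset v w).mp hw)
    have hw1 := (hf.mapsTo (Set.mem_univ w)).1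
    simp only [coe_Icc, Set.mem_Icc]
    omega
  have hdeg := card_le_card_of_injOn f hnbr (hf.injOn.mono (Set.subset_univ _))
  have := G.minDegree_le_degree v
  simp only [card_neighborFinset_eq_degree, Nat.card_Icc] at hdeg
  omega

lemma strength_le_strOf (hf : IsNumbering f) : strength G ≤ strOf G f :=
  Nat.sInf_le ⟨f, hf, rfl⟩

theorem strength_eq_card_add_minDegree [DecidableRel G.Adj] (hδ : 0 < G.minDegree)
    (hf : IsNumbering f) (hstr : strOf G f ≤ Fintype.card V + G.minDegree) :
    strength G = Fintype.card V + G.minDegree :=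
  le_antisymm ((strength_le_strOf hf).trans hstr) <|
    le_csInf ⟨_, f, hf, rfl⟩ fun _ ⟨_, hg, hgn⟩ ↦ hgn ▸ card_add_minDegree_le_strOf hδ hg

end Numbering

section Cone

variable {α : Type*} (G : SimpleGraph α)

@[simp]
lemma coneGraph_adj_none_some (a : α) : (coneGraph G).Adj none (some a) := trivial

@[simp]
lemma coneGraph_adj_some_none (a : α) : (coneGraph G).Adj (some a) none := trivial

@[simp]
lemma coneGraph_adj_some_some (a b : α) : (coneGraph G).Adj (some a) (some b) ↔ G.Adj a b :=
  Iff.rfl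

lemma injective_elim' {β : Type*} {c : β} {g : α → β} (hg : Injective g) (hc : ∀ a, g a ≠ c) :
    Injective (Option.elim' c g) := by
  rintro (_ | a) (_ | b) hab
  · rfl
  · exact absurd hab.symm (hc b)
  · exact absurd hab (hc a)
  · exact congrArg some (hg hab)

variable [Fintype α]

lemma coneGraph_degree_some [DecidableRel G.Adj] (a : α) :
    (coneGraph G).degree (some a) = G.degree a + 1 := by
  have hnbr : (coneGraph G).neighborFinset (some a) =
      insert none ((G.neighborFinset a).map Embedding.some) := by
    ext (_ | b) <;> simp
  rw [← card_neighborFinset_eq_degree, hnbr, card_insert_of_notMem (by simp), card_map,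
    card_neighborFinset_eq_degree]

lemma coneGraph_degree_none : (coneGraph G).degree none = Fintype.card α := by
  have hnbr : (coneGraph G).neighborFinset none = univ.map Embedding.some := by
    ext (_ | b) <;> simp
  rw [← card_neighborFinset_eq_degree, hnbr, card_map, card_univ]

lemma coneGraph_minDegree [DecidableRel G.Adj] [Nonempty α] :
    (coneGraph G).minDegree = G.minDegree + 1 := by
  obtain ⟨a, ha⟩ := G.exists_minimal_degree_vertex
  refine le_antisymm ?_ (le_minDegree_of_forall_le_degree _ _ ?_)
  · simpa [ha, coneGraph_degree_some] using (coneGraph G).minDegree_le_degree (some a)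
  · rintro (_ | b)
    · rw [coneGraph_degree_none, ha]
      exact G.degree_lt_card_verts a
    · simpa [coneGraph_degree_some] using G.minDegree_le_degree b

variable {G}

lemma strOf_coneGraph_le {c m : ℕ} {g : α → ℕ} (hhub : ∀ a, c + g a ≤ m)
    (hbase : ∀ a b, G.Adj a b → g a + g b ≤ m) :
    strOf (coneGraph G) (Option.elim' c g) ≤ m := by
  refine strOf_le ?_
  rintro (_ | a) (_ | b) hab
  · exact ((coneGraph G).irrefl hab).elim
  · exact hhub b
  · simpa [add_comm] using hhub a
  · exact hbase a b hab

lemma isNumbering_elim'_one {g : α → ℕ} (hg : Injective g)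
    (hmem : ∀ a, g a ∈ Set.Icc 2 (Fintype.card α + 1)) :
    IsNumbering (Option.elim' 1 g) := by
  refine isNumbering_of_injective (injective_elim' hg fun a ↦ ?_) ?_
  · have := (hmem a).1
    omega
  · rintro (_ | a)
    · simp
    · simpa using ⟨(hmem a).1.trans' one_le_two, (hmem a).2⟩

/-- Witnessed by numbering the apex `1` and the base by `g`. -/
theorem strength_coneGraph [DecidableRel G.Adj] [Nonempty α] {g : α → ℕ} (hg : Injective g)
    (hmem : ∀ a, g a ∈ Set.Icc 2 (Fintype.card α + 1))
    (hbase : ∀ a b, G.Adj a b → g a + g b ≤ Fintype.card α + G.minDegree + 2) :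
    strength (coneGraph G) = Fintype.card (Option α) + (coneGraph G).minDegree := by
  have hδ := coneGraph_minDegree G
  refine strength_eq_card_add_minDegree (by omega) (isNumbering_elim'_one hg hmem)
    (strOf_coneGraph_le (fun a ↦ ?_) fun a b hab ↦ ?_)
  · have := (hmem a).2
    rw [hδ, Fintype.card_option]
    omega
  · have := hbase a b hab
    rw [hδ, Fintype.card_option]
    omega

end Cone

def zigzag (p j : ℕ) : ℕ :=
  if j % 2 = 0 then j / 2 + 2 else p - j / 2

section Zigzag

variable {p : ℕ}

lemma zigzag_mem_Icc {j : ℕ} (hj : j + 2 ≤ p) : zigzag p j ∈ Set.Icc 2 p := by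
  unfold zigzag
  split_ifs <;> simp only [Set.mem_Icc] <;> omega

lemma zigzag_injOn : Set.InjOn (zigzag p) (Set.Iic (p - 2)) := by
  intro i hi j hj hij
  simp only [Set.mem_Iic] at hi hj
  unfold zigzag at hij
  split_ifs at hij <;> omega

lemma injective_zigzag_val (p : ℕ) : Injective fun j : Fin (p - 1) ↦ zigzag p j :=
  fun i j hij ↦ Fin.ext <| zigzag_injOn (by simp; omega) (by simp; omega) hij

lemma zigzag_add_zigzag_succ_le {j : ℕ} (hj : j ≤ p) : zigzag p j + zigzag p (j + 1) ≤ p + 3 := by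
  unfold zigzag
  split_ifs <;> omega

lemma zigzag_add_le_of_cycleGraph_adj {n : ℕ} {a b : Fin (n + 2)}
    (h : (cycleGraph (n + 2)).Adj a b) : zigzag (n + 3) a + zigzag (n + 3) b ≤ n + 6 := by
  wlog hba : b = a + 1 generalizing a b
  · have hab : a = b + 1 := by
      rw [cycleGraph_adj, sub_eq_iff_eq_add', sub_eq_iff_eq_add'] at h
      exact h.resolve_right hba
    rw [add_comm]
    exact this h.symm hab
  subst hba
  have ha := a.isLt
  rw [Fin.val_add_one]
  split_ifs
  · have := (zigzag_mem_Icc (p := n + 3) (j := a) (by omega)).2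
    rw [show zigzag (n + 3) 0 = 2 by simp [zigzag]]
    omega
  · exact zigzag_add_zigzag_succ_le (by omega)

lemma reflect_zigzag_add_le_of_pathGraph_adj {a b : Fin (p - 1)}
    (h : (pathGraph (p - 1)).Adj a b) : (p + 2 - zigzag p a) + (p + 2 - zigzag p b) ≤ p + 2 := by
  rw [pathGraph_adj] at h
  have ha := a.isLt
  have hb := b.isLt
  unfold zigzag
  split_ifs <;> omega

end Zigzag

lemma minDegree_cycleGraph {m : ℕ} (hm : 3 ≤ m) : (cycleGraph m).minDegree = 2 := by
  obtain ⟨n, rfl⟩ := Nat.exists_eq_add_of_le' hm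
  exact IsRegularOfDegree.minDegree_eq (G := cycleGraph (n + 3)) fun _ ↦ cycleGraph_degree_three_le

lemma card_option_fin_pred {p : ℕ} (hp : 1 ≤ p) : Fintype.card (Option (Fin (p - 1))) = p := by
  simp only [Fintype.card_option, Fintype.card_fin]
  omega

theorem strength_wheelGraph {p : ℕ} (hp : 4 ≤ p) :
    strength (wheelGraph p) = p + (wheelGraph p).minDegree := by
  have : Nonempty (Fin (p - 1)) := ⟨⟨0, by omega⟩⟩
  refine (strength_coneGraph (G := cycleGraph (p - 1)) (injective_zigzag_val p) (fun j ↦ ?_)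
    fun a b hab ↦ ?_).trans (congrArg (· + _) (card_option_fin_pred (by omega)))
  · simpa [Nat.sub_add_cancel (by omega : 1 ≤ p)] using zigzag_mem_Icc (p := p) (j := j) (by omega)
  · rw [minDegree_cycleGraph (by omega), Fintype.card_fin]
    obtain ⟨n, rfl⟩ : ∃ n, p = n + 4 := ⟨p - 4, by omega⟩
    exact zigzag_add_le_of_cycleGraph_adj (n := n + 1) hab

theorem strength_fanGraph {p : ℕ} (hp : 3 ≤ p) :
    strength (fanGraph p) = p + (fanGraph p).minDegree := by
  have : Nontrivial (Fin (p - 1)) := Fin.nontrivial_iff_two_le.mpr (by omega)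
  have hmem (j : Fin (p - 1)) : zigzag p j ∈ Set.Icc 2 p := zigzag_mem_Icc (by omega)
  refine (strength_coneGraph (G := pathGraph (p - 1))
    (g := fun j : Fin (p - 1) ↦ p + 2 - zigzag p j) (fun i j hij ↦ injective_zigzag_val p ?_)
    (fun j ↦ ?_) fun a b hab ↦ ?_).trans
    (congrArg (· + _) (card_option_fin_pred (by omega)))
  · have := hmem i; have := hmem j
    simp only [Set.mem_Icc] at *
    omega
  · have := hmem j
    simp only [Set.mem_Icc, Fintype.card_fin] at *
    omega
  · have := (pathGraph_preconnected (p - 1)).minDegree_pos_of_nontrivial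
    have := reflect_zigzag_add_le_of_pathGraph_adj hab
    simp only [Fintype.card_fin]
    omega

/-- A wheel or fan graph `G` of order `p` has `str(G) = p + δ(G)`. -/
theorem strength_wheel_fan (p : ℕ) :
    (4 ≤ p → strength (wheelGraph p) = p + (wheelGraph p).minDegree) ∧
    (3 ≤ p → strength (fanGraph p) = p + (fanGraph p).minDegree) :=
  ⟨strength_wheelGraph, strength_fanGraph⟩
end
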